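/- arXiv:1911.09080 — 2 statements merged into one kernel-verified Lean document; each statement's English description precedes it below -/
import Mathlib

section
/- Let A be an n×n Hermitian matrix with eigenvalues λ_1(A),…,λ_n(A), and let M be the (n−1)×(n−1) matrix obtained by deleting the first row and first column of A, with eigenvalues λ_1(M),…,λ_{n−1}(M). Let v_i denote the first coordinate of a unit-norm eigenvector of A associated to λ_i(A). Then |v_i|² · ∏_{k≠i} (λ_i(A) − λ_k(A)) = ∏_{k=1}^{n−1} (λ_i(A) − λ_k(M)). -/
/-!
Write `λ = λᵢ(A)` and `U` for the unitary whose columns are the chosen orthonormal eigenvectors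
of `A`. The spectral theorem gives `adj(λ - A) = U · diag(∏_{j ≠ k} (λ - λⱼ)) · U*`, and every
diagonal entry of the middle factor except the `i`-th contains the factor `λ - λᵢ = 0`, so
`adj(λ - A)₀₀ = |U₀ᵢ|² ∏_{k ≠ i} (λ - λₖ)`. By cofactor expansion, `adj(λ - A)₀₀ = det(λ - M)`,
which is `∏ₖ (λ - λₖ(M))`. If `λ` is a multiple eigenvalue both sides vanish; otherwise its
eigenspace is the line spanned by the `i`-th column of `U`, so `v` is a unimodular multiple of
that column and `|v₀| = |U₀ᵢ|`.
-/

open Matrix Finset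

namespace Matrix

variable {α n : Type*} [Fintype n] [DecidableEq n] [CommRing α]

theorem adjugate_eq_det_smul_of_mul_eq_one {A B : Matrix n n α} (h : A * B = 1) :
    adjugate A = A.det • B := by
  rw [← mul_one (adjugate A), ← h, ← mul_assoc, adjugate_mul, smul_mul_assoc, one_mul]

theorem adjugate_unitary_mul_mul_star [StarRing α] (U : unitaryGroup n α) (D : Matrix n n α) :
    adjugate ((U : Matrix n n α) * D * star (U : Matrix n n α)) =
      U * adjugate D * star (U : Matrix n n α) := by
  have hU : (U : Matrix n n α) * star (U : Matrix n n α) = 1 := Unitary.mul_star_self_of_mem U.2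
  have hU' : star (U : Matrix n n α) * U = 1 := Unitary.star_mul_self_of_mem U.2
  have hdet : (star (U : Matrix n n α)).det * (U : Matrix n n α).det = 1 := by
    rw [← det_mul, hU', det_one]
  rw [adjugate_mul_distrib, adjugate_mul_distrib, adjugate_eq_det_smul_of_mul_eq_one hU,
    adjugate_eq_det_smul_of_mul_eq_one hU', smul_mul_assoc, mul_smul_comm, mul_smul_comm,
    smul_smul, hdet, one_smul, mul_assoc]

end Matrix

namespace Matrix.IsHermitian

variable {𝕜 m : Type*} [RCLike 𝕜] [Fintype m] [DecidableEq m] {H : Matrix m m 𝕜}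
  (hH : H.IsHermitian)

theorem spectral_theorem_smul_one_sub (x : 𝕜) :
    x • (1 : Matrix m m 𝕜) - H = (hH.eigenvectorUnitary : Matrix m m 𝕜) *
      diagonal (fun k => x - hH.eigenvalues k) * star (hH.eigenvectorUnitary : Matrix m m 𝕜) := by
  conv_lhs => rw [hH.spectral_theorem, Unitary.conjStarAlgAut_apply]
  rw [← diagonal_sub, ← smul_one_eq_diagonal, Matrix.mul_sub, Matrix.sub_mul, mul_smul_comm,
    mul_one, smul_mul_assoc, Unitary.mul_star_self_of_mem hH.eigenvectorUnitary.2]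
  rfl

theorem det_smul_one_sub (x : 𝕜) :
    (x • (1 : Matrix m m 𝕜) - H).det = ∏ k, (x - hH.eigenvalues k) := by
  rw [smul_one_eq_diagonal, ← scalar_apply, ← eval_charpoly, hH.charpoly_eq, Polynomial.eval_prod]
  simp

theorem adjugate_smul_one_sub (x : 𝕜) :
    Matrix.adjugate (x • (1 : Matrix m m 𝕜) - H) = (hH.eigenvectorUnitary : Matrix m m 𝕜) *
      diagonal (fun k => ∏ j ∈ univ.erase k, (x - hH.eigenvalues j)) *
      star (hH.eigenvectorUnitary : Matrix m m 𝕜) := by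
  rw [hH.spectral_theorem_smul_one_sub, adjugate_unitary_mul_mul_star, adjugate_diagonal]

theorem adjugate_eigenvalue_smul_one_sub_apply (i a b : m) :
    Matrix.adjugate ((hH.eigenvalues i : 𝕜) • (1 : Matrix m m 𝕜) - H) a b =
      (∏ j ∈ univ.erase i, ((hH.eigenvalues i : 𝕜) - hH.eigenvalues j)) *
        hH.eigenvectorBasis i a * star (hH.eigenvectorBasis i b) := by
  rw [hH.adjugate_smul_one_sub, mul_apply, Fintype.sum_eq_single i]
  · simp only [mul_diagonal, star_apply, eigenvectorUnitary_apply]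
    ring
  · intro k hk
    rw [mul_diagonal, prod_eq_zero (mem_erase.2 ⟨Ne.symm hk, mem_univ i⟩) (sub_self _), mul_zero,
      zero_mul]

theorem adjugate_smul_one_sub_apply_zero_zero {n : ℕ} {H : Matrix (Fin (n + 1)) (Fin (n + 1)) 𝕜}
    (hH : H.IsHermitian) (x : 𝕜) :
    Matrix.adjugate (x • (1 : Matrix (Fin (n + 1)) (Fin (n + 1)) 𝕜) - H) 0 0 =
      ∏ k, (x - (hH.submatrix Fin.succ).eigenvalues k) := by
  have hminor :
      (x • 1 - H).submatrix Fin.succ Fin.succ = x • 1 - H.submatrix Fin.succ Fin.succ := by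
    rw [← submatrix_one _ (Fin.succ_injective n)]
    rfl
  rw [adjugate_fin_succ_eq_det_submatrix, Fin.succAbove_zero, hminor, det_smul_one_sub,
    Fin.val_zero, pow_zero, one_mul]

theorem star_eigenvectorUnitary_mulVec_apply_eq_zero {μ : ℝ} {v : m → 𝕜}
    (hv : H *ᵥ v = (μ : 𝕜) • v) {k : m} (hk : hH.eigenvalues k ≠ μ) :
    (star (hH.eigenvectorUnitary : Matrix m m 𝕜) *ᵥ v) k = 0 := by
  set U := (hH.eigenvectorUnitary : Matrix m m 𝕜)
  have hdiag : star U * H = diagonal (RCLike.ofReal ∘ hH.eigenvalues) * star U := by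
    rw [← hH.conjStarAlgAut_star_eigenvectorUnitary, Unitary.conjStarAlgAut_star_apply, mul_assoc,
      Unitary.mul_star_self_of_mem hH.eigenvectorUnitary.2, mul_one]
  have hscaled : diagonal (RCLike.ofReal ∘ hH.eigenvalues) *ᵥ (star U *ᵥ v) =
      (μ : 𝕜) • (star U *ᵥ v) := by
    rw [mulVec_mulVec, ← hdiag, ← mulVec_mulVec, hv, mulVec_smul]
  have hscaled_k := congrFun hscaled k
  rw [mulVec_diagonal, Pi.smul_apply, smul_eq_mul, Function.comp_apply] at hscaled_k
  have hfactored : ((hH.eigenvalues k : 𝕜) - μ) * (star U *ᵥ v) k = 0 := by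
    linear_combination hscaled_k
  exact (mul_eq_zero.1 hfactored).resolve_left (sub_ne_zero.2 (by exact_mod_cast hk))

theorem eq_smul_eigenvectorBasis_of_simple {i : m}
    (hsimple : ∀ k ≠ i, hH.eigenvalues k ≠ hH.eigenvalues i)
    {v : m → 𝕜} (hv : H *ᵥ v = (hH.eigenvalues i : 𝕜) • v) :
    v = (star (hH.eigenvectorUnitary : Matrix m m 𝕜) *ᵥ v) i • ⇑(hH.eigenvectorBasis i) := by
  ext a
  conv_lhs => rw [← one_mulVec v, ← Unitary.mul_star_self_of_mem hH.eigenvectorUnitary.2,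
    ← mulVec_mulVec]
  rw [mulVec, dotProduct, Fintype.sum_eq_single i fun k hk => by
    rw [hH.star_eigenvectorUnitary_mulVec_apply_eq_zero hv (hsimple k hk), mul_zero]]
  rw [eigenvectorUnitary_apply, Pi.smul_apply, smul_eq_mul, mul_comm]

theorem norm_apply_eq_of_simple {i : m}
    (hsimple : ∀ k ≠ i, hH.eigenvalues k ≠ hH.eigenvalues i)
    {v : m → 𝕜} (hv : H *ᵥ v = (hH.eigenvalues i : 𝕜) • v) (hnorm : ∑ j, ‖v j‖ ^ 2 = 1)
    (a : m) : ‖v a‖ = ‖hH.eigenvectorBasis i a‖ := by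
  have hvc := hH.eq_smul_eigenvectorBasis_of_simple hsimple hv
  set c := (star (hH.eigenvectorUnitary : Matrix m m 𝕜) *ᵥ v) i
  have hb : ∑ j, ‖hH.eigenvectorBasis i j‖ ^ 2 = 1 := by
    rw [← EuclideanSpace.norm_sq_eq, hH.eigenvectorBasis.norm_eq_one, one_pow]
  have hc : ‖c‖ = 1 := by
    rw [hvc] at hnorm
    simp only [Pi.smul_apply, smul_eq_mul, norm_mul, mul_pow, ← mul_sum, hb, mul_one] at hnorm
    exact (pow_eq_one_iff_of_nonneg (norm_nonneg c) two_ne_zero).1 hnorm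
  rw [hvc, Pi.smul_apply, smul_eq_mul, norm_mul, hc, one_mul]

end Matrix.IsHermitian

theorem stmt_0 (n : ℕ) (A : Matrix (Fin (n + 1)) (Fin (n + 1)) ℂ)
    (hA : A.IsHermitian) (i : Fin (n + 1))
    (v : Fin (n + 1) → ℂ)
    (hnorm : ∑ j, ‖v j‖ ^ 2 = 1)
    (hv : A.mulVec v = (hA.eigenvalues i : ℂ) • v) :
    ‖v 0‖ ^ 2 * ∏ k ∈ Finset.univ.erase i, (hA.eigenvalues i - hA.eigenvalues k)
      = ∏ k : Fin n,
          (hA.eigenvalues i - (hA.submatrix Fin.succ).eigenvalues k) := by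
  apply RCLike.ofReal_injective (K := ℂ)
  simp only [RCLike.ofReal_mul, RCLike.ofReal_prod, RCLike.ofReal_sub, RCLike.ofReal_pow]
  rw [← hA.adjugate_smul_one_sub_apply_zero_zero, hA.adjugate_eigenvalue_smul_one_sub_apply,
    mul_assoc, mul_comm]
  by_cases hsimple : ∀ k ≠ i, hA.eigenvalues k ≠ hA.eigenvalues i
  · rw [hA.norm_apply_eq_of_simple hsimple hv hnorm, RCLike.star_def, RCLike.mul_conj]
  · obtain ⟨k, hki, hk⟩ := not_forall₂.1 hsimple
    rw [prod_eq_zero (mem_erase.2 ⟨hki, mem_univ k⟩) (by rw [not_not.1 hk, sub_self]), zero_mul,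
      zero_mul]
end

section
/- Let A be an n×n Hermitian matrix whose eigenvalue λ_i(A) is simple and is not an eigenvalue of M, the submatrix obtained by deleting the first row and column of A. Then the first coordinate v_i of any normalized eigenvector for λ_i(A) satisfies |v_i|² = ∏_{k=1}^{n−1}(λ_i(A) − λ_k(M)) / ∏_{k≠i}(λ_i(A) − λ_k(A)), and in particular v_i ≠ 0. -/
/-!
Put `λ = λ_i(A)`. The `(0,0)` cofactor of `λ • 1 - A` is `det (λ • 1 - M) = ∏ₖ (λ - λ_k(M))`.
On the other hand, diagonalising `A = U D U*` with `U` unitary gives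
`adj (λ • 1 - A) = U adj (λ • 1 - D) U*`, and the adjugate of the diagonal matrix `λ • 1 - D` has
the single nonzero entry `∏_{k ≠ i} (λ - λ_k(A))`, at `(i, i)`. Hence the cofactor is also
`|U₀ᵢ|² ∏_{k ≠ i} (λ - λ_k(A))`. Since `λ` is simple, a unit eigenvector `v` for `λ` is a
unimodular multiple of the `i`-th column of `U`, so `|v₀| = |U₀ᵢ|`.
-/

open Matrix Finset

namespace Matrix

variable {n R : Type*} [Fintype n] [DecidableEq n] [CommRing R]

theorem adjugate_mul_mul_of_mul_eq_one {U V : Matrix n n R} (D : Matrix n n R) (h : V * U = 1) :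
    adjugate (U * D * V) = U * adjugate D * V := by
  have hUV : U * V = 1 := mul_eq_one_comm.mp h
  have hU : adjugate U = det U • V := by
    rw [← Matrix.mul_one (adjugate U), ← hUV, ← Matrix.mul_assoc, adjugate_mul, Matrix.smul_mul,
      Matrix.one_mul]
  have hV : adjugate V = det V • U := by
    rw [← Matrix.mul_one (adjugate V), ← h, ← Matrix.mul_assoc, adjugate_mul, Matrix.smul_mul,
      Matrix.one_mul]
  have hdet : det U * det V = 1 := by rw [← det_mul, hUV, det_one]
  rw [adjugate_mul_distrib, adjugate_mul_distrib, hU, hV]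
  simp only [Matrix.mul_smul, Matrix.smul_mul, smul_smul, hdet, one_smul, Matrix.mul_assoc]

theorem scalar_sub_submatrix_succ {m : ℕ} (A : Matrix (Fin (m + 1)) (Fin (m + 1)) R) (z : R) :
    (scalar (Fin (m + 1)) z - A).submatrix Fin.succ Fin.succ
      = scalar (Fin m) z - A.submatrix Fin.succ Fin.succ := by
  rw [submatrix_sub, Pi.sub_apply, Pi.sub_apply, scalar_apply,
    submatrix_diagonal _ _ (Fin.succ_injective m)]
  rfl

variable {𝕜 : Type*} [RCLike 𝕜] {A : Matrix n n 𝕜}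

theorem mul_diagonal_mul_star_apply_self (U : Matrix n n 𝕜) (p : n → 𝕜) (a : n) :
    (U * diagonal p * star U) a a = ∑ j, p j * ‖U a j‖ ^ 2 := by
  rw [mul_apply]
  refine sum_congr rfl fun j _ => ?_
  rw [mul_diagonal, star_apply, RCLike.star_def, ← RCLike.mul_conj]
  ring

theorem IsHermitian.det_scalar_sub (hA : A.IsHermitian) (z : 𝕜) :
    det (scalar n z - A) = ∏ k, (z - hA.eigenvalues k) := by
  rw [← eval_charpoly, hA.charpoly_eq, Polynomial.eval_prod]
  simp

theorem IsHermitian.scalar_sub_eq_mul_diagonal_mul_star (hA : A.IsHermitian) (z : 𝕜) :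
    scalar n z - A = (hA.eigenvectorUnitary : Matrix n n 𝕜)
      * diagonal (fun k => z - hA.eigenvalues k) * star (hA.eigenvectorUnitary : Matrix n n 𝕜) := by
  set U := (hA.eigenvectorUnitary : Matrix n n 𝕜)
  have hz : scalar n z = U * scalar n z * star U := by
    rw [← (scalar_commute z (Commute.all z) _).eq, Matrix.mul_assoc,
      Unitary.mul_star_self_of_mem hA.eigenvectorUnitary.2, Matrix.mul_one]
  conv_lhs => rw [hA.spectral_theorem, Unitary.conjStarAlgAut_apply, hz]
  rw [← Matrix.sub_mul, ← Matrix.mul_sub, scalar_apply, diagonal_sub]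
  rfl

theorem IsHermitian.adjugate_scalar_sub (hA : A.IsHermitian) (z : 𝕜) :
    (scalar n z - A).adjugate = (hA.eigenvectorUnitary : Matrix n n 𝕜)
      * diagonal (fun j => ∏ k ∈ univ.erase j, (z - hA.eigenvalues k))
      * star (hA.eigenvectorUnitary : Matrix n n 𝕜) := by
  rw [hA.scalar_sub_eq_mul_diagonal_mul_star,
    adjugate_mul_mul_of_mul_eq_one _ (Unitary.coe_star_mul_self _), adjugate_diagonal]

/-- The `(0, 0)` cofactor of `z • 1 - A`, computed from its definition and from the spectral
decomposition of `A`. -/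
theorem IsHermitian.prod_sub_eigenvalues_submatrix_succ {m : ℕ}
    {A : Matrix (Fin (m + 1)) (Fin (m + 1)) 𝕜} (hA : A.IsHermitian) (z : 𝕜) :
    ∏ k, (z - (hA.submatrix Fin.succ).eigenvalues k)
      = ∑ j, (∏ k ∈ univ.erase j, (z - hA.eigenvalues k)) * ‖hA.eigenvectorBasis j 0‖ ^ 2 := by
  have h := adjugate_fin_succ_eq_det_submatrix (scalar (Fin (m + 1)) z - A) 0 0
  rw [Fin.succAbove_zero, scalar_sub_submatrix_succ, det_scalar_sub, hA.adjugate_scalar_sub,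
    mul_diagonal_mul_star_apply_self] at h
  simpa using h.symm

/-- The eigenvector–eigenvalue identity: at `z = λ_i(A)` only the term `j = i` survives. -/
theorem IsHermitian.prod_eigenvalue_sub_eigenvalues_submatrix_succ {m : ℕ}
    {A : Matrix (Fin (m + 1)) (Fin (m + 1)) 𝕜} (hA : A.IsHermitian) (i : Fin (m + 1)) :
    ∏ k, (hA.eigenvalues i - (hA.submatrix Fin.succ).eigenvalues k)
      = ‖hA.eigenvectorBasis i 0‖ ^ 2
          * ∏ k ∈ univ.erase i, (hA.eigenvalues i - hA.eigenvalues k) := by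
  have h := hA.prod_sub_eigenvalues_submatrix_succ (hA.eigenvalues i : 𝕜)
  rw [Fintype.sum_eq_single i fun j hj => by
    rw [prod_eq_zero (mem_erase.mpr ⟨Ne.symm hj, mem_univ i⟩) (sub_self _), zero_mul]] at h
  rw [mul_comm]
  exact_mod_cast h

theorem IsHermitian.exists_eq_smul_eigenvectorBasis (hA : A.IsHermitian) {i : n}
    (hsimple : ∀ k, k ≠ i → hA.eigenvalues k ≠ hA.eigenvalues i) {v : n → 𝕜}
    (hv : A *ᵥ v = (hA.eigenvalues i : 𝕜) • v) :
    ∃ c : 𝕜, v = c • ⇑(hA.eigenvectorBasis i) := by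
  set U := (hA.eigenvectorUnitary : Matrix n n 𝕜)
  set w := star U *ᵥ v
  have hcomm : diagonal (RCLike.ofReal ∘ hA.eigenvalues) * star U = star U * A := by
    rw [← hA.conjStarAlgAut_star_eigenvectorUnitary, Unitary.conjStarAlgAut_star_apply,
      Matrix.mul_assoc _ U, Unitary.mul_star_self_of_mem hA.eigenvectorUnitary.2, Matrix.mul_one]
  have hw : ∀ k, k ≠ i → w k = 0 := by
    intro k hk
    have h := congrFun (congrArg (· *ᵥ v) hcomm) k
    rw [← mulVec_mulVec, ← mulVec_mulVec, hv, mulVec_smul, mulVec_diagonal, Pi.smul_apply,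
      smul_eq_mul] at h
    exact (mul_eq_mul_right_iff.mp h).resolve_left (RCLike.ofReal_injective.ne (hsimple k hk))
  have hv' : v = U *ᵥ w := by
    rw [mulVec_mulVec, Unitary.mul_star_self_of_mem hA.eigenvectorUnitary.2, one_mulVec]
  refine ⟨w i, funext fun j => ?_⟩
  rw [hv', mulVec, dotProduct, Fintype.sum_eq_single i fun k hk => by rw [hw k hk, mul_zero]]
  exact mul_comm _ _

theorem IsHermitian.norm_apply_eq_of_mulVec_eq (hA : A.IsHermitian) {i : n}
    (hsimple : ∀ k, k ≠ i → hA.eigenvalues k ≠ hA.eigenvalues i) {v : n → 𝕜}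
    (hnorm : ∑ j, ‖v j‖ ^ 2 = 1) (hv : A *ᵥ v = (hA.eigenvalues i : 𝕜) • v) (j : n) :
    ‖v j‖ = ‖hA.eigenvectorBasis i j‖ := by
  obtain ⟨c, rfl⟩ := hA.exists_eq_smul_eigenvectorBasis hsimple hv
  have hc : ‖c‖ ^ 2 = 1 := by
    simpa [norm_mul, mul_pow, ← mul_sum, ← EuclideanSpace.norm_sq_eq] using hnorm
  rw [Pi.smul_apply, norm_smul, (pow_eq_one_iff_of_nonneg (norm_nonneg c) two_ne_zero).mp hc,
    one_mul]

end Matrix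

theorem stmt_6 (n : ℕ) (A : Matrix (Fin (n + 1)) (Fin (n + 1)) ℂ)
    (hA : A.IsHermitian) (i : Fin (n + 1))
    (hsimple : ∀ k, k ≠ i → hA.eigenvalues k ≠ hA.eigenvalues i)
    (hnotM : ∀ k : Fin n, (hA.submatrix Fin.succ).eigenvalues k ≠ hA.eigenvalues i)
    (v : Fin (n + 1) → ℂ)
    (hnorm : ∑ j, ‖v j‖ ^ 2 = 1)
    (hv : A.mulVec v = (hA.eigenvalues i : ℂ) • v) :
    ‖v 0‖ ^ 2
        = (∏ k : Fin n, (hA.eigenvalues i - (hA.submatrix Fin.succ).eigenvalues k))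
          / ∏ k ∈ Finset.univ.erase i, (hA.eigenvalues i - hA.eigenvalues k)
      ∧ v 0 ≠ 0 := by
  set num := ∏ k, (hA.eigenvalues i - (hA.submatrix Fin.succ).eigenvalues k)
  set den := ∏ k ∈ univ.erase i, (hA.eigenvalues i - hA.eigenvalues k)
  have hden : den ≠ 0 :=
    prod_ne_zero_iff.mpr fun k hk => sub_ne_zero.mpr (hsimple k (ne_of_mem_erase hk)).symm
  have hnum : num ≠ 0 := prod_ne_zero_iff.mpr fun k _ => sub_ne_zero.mpr (hnotM k).symm
  have hidentity : num = ‖hA.eigenvectorBasis i 0‖ ^ 2 * den :=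
    hA.prod_eigenvalue_sub_eigenvalues_submatrix_succ i
  have hformula : ‖v 0‖ ^ 2 = num / den := by
    rw [hidentity, mul_div_cancel_right₀ _ hden, hA.norm_apply_eq_of_mulVec_eq hsimple hnorm hv]
  refine ⟨hformula, fun h0 => div_ne_zero hnum hden ?_⟩
  rw [← hformula, h0, norm_zero, zero_pow two_ne_zero]
end
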